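/- Let g ≥ 0, r ≥ 1, and let F(x,y,u,t) be the rational power series (1/(1+xyut)^{r-1}) · Φ_g{(1-xyz^2)(1-xz)^g(1-yz)^g} / ((1-t)(1-x^2yu^2t^2)^g(1-xy^2u^2t^2)^g). Then Σ_i ([u^i t^{i+1}] F) z^i = Ψ_g{(1-xyz^2)(1-xz)^g(1-yz)^g} / ((1+xyz)^{r-1}(1-x^2yz^2)^g(1-xy^2z^2)^g), where Ψ_g is the ℚ[x,y]-linear map with Ψ_g(z^j) = z^j for 0 ≤ j ≤ g, Ψ_g(z^{g+1}) = 0, and Ψ_g(z^j) = z^{j-1} for g+2 ≤ j ≤ 2g+2. -/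

import Mathlib

open MvPolynomial

noncomputable section

/-- The coefficient ring `ℚ[x,y]`, with `x = X 0`, `y = X 1`. -/
abbrev Rxy := MvPolynomial (Fin 2) ℚ

/-- Formal power series in `u, t` (`u` is variable `0`, `t` is variable `1`) over `ℚ[x,y]`. -/
abbrev Sut := MvPowerSeries (Fin 2) Rxy

/-- Inclusion of constants `ℚ[x,y] → ℚ[x,y][[u,t]]`. -/
def Cc : Rxy →+* Sut := MvPowerSeries.C (σ := Fin 2) (R := Rxy)

/-- `(1 - xyz²)(1 - xz)^g (1 - yz)^g` as a polynomial in `z` over `ℚ[x,y]`. -/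
def Wpoly (g : ℕ) : Polynomial Rxy :=
  (1 - Polynomial.C (X 0 * X 1) * Polynomial.X ^ 2) *
    (1 - Polynomial.C (X 0) * Polynomial.X) ^ g *
    (1 - Polynomial.C (X 1) * Polynomial.X) ^ g

/-- The numerator `N = Φ_g{(1-xyz²)(1-xz)^g(1-yz)^g}`, where `Φ_g(z^j) = u^j t^j` for
`0 ≤ j ≤ g`, `Φ_g(z^{g+1}) = 0` and `Φ_g(z^j) = u^{j-1} t^j` for `g+2 ≤ j ≤ 2g+2`. -/
def NumS (g : ℕ) : Sut :=
  ∑ j ∈ Finset.range (2 * g + 3),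
    (if j ≤ g then MvPowerSeries.X 0 ^ j * MvPowerSeries.X 1 ^ j
     else if j = g + 1 then 0
     else MvPowerSeries.X 0 ^ (j - 1) * MvPowerSeries.X 1 ^ j) * Cc ((Wpoly g).coeff j)

/-- The denominator `(1+xyut)^{r-1} (1-t) (1-x²yu²t²)^g (1-xy²u²t²)^g`. -/
def DenS (g r : ℕ) : Sut :=
  (1 + Cc (X 0 * X 1) * MvPowerSeries.X 0 * MvPowerSeries.X 1) ^ (r - 1) *
    (1 - MvPowerSeries.X 1) *
    (1 - Cc (X 0 ^ 2 * X 1) * MvPowerSeries.X 0 ^ 2 * MvPowerSeries.X 1 ^ 2) ^ g *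
    (1 - Cc (X 0 * X 1 ^ 2) * MvPowerSeries.X 0 ^ 2 * MvPowerSeries.X 1 ^ 2) ^ g

/-- The coefficient `c_{i,n} ∈ ℚ[x,y]` of `u^i t^n` in a power series. -/
def coeffUT (F : Sut) (i n : ℕ) : Rxy :=
  MvPowerSeries.coeff (σ := Fin 2) (R := Rxy) (Finsupp.single 0 i + Finsupp.single 1 n) F

/-- `Ψ_g{(1-xyz²)(1-xz)^g(1-yz)^g}` where `Ψ_g(z^j) = z^j` for `0 ≤ j ≤ g`,
`Ψ_g(z^{g+1}) = 0`, and `Ψ_g(z^j) = z^{j-1}` for `g+2 ≤ j ≤ 2g+2`. -/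
def PsiW (g : ℕ) : PowerSeries Rxy :=
  (∑ j ∈ Finset.range (g + 1),
      PowerSeries.C (R := Rxy) ((Wpoly g).coeff j) * PowerSeries.X ^ j) +
  ∑ j ∈ Finset.Ico (g + 2) (2 * g + 3),
      PowerSeries.C (R := Rxy) ((Wpoly g).coeff j) * PowerSeries.X ^ (j - 1)

/-!
Write the denominator as `D(ut) · (1 - t)` with `D(z) = (1+xyz)^{r-1}(1-x²yz²)^g(1-xy²z²)^g`.
Extracting `Σ_i ([u^i t^{i+1}] F) z^i` is `ℚ[x,y]`-linear and turns multiplication by `p(ut)`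
into multiplication by `p(z)`, so the left-hand side is the extraction applied to `G = D(ut) F`,
where `(1 - t) G = N`. Dividing by `1 - t` replaces `[u^i t^{i+1}]` by `Σ_{m ≤ i+1} [u^i t^m]`,
which sends a monomial `u^a t^b` to `z^a` if `b ≤ a + 1` and to `0` otherwise. The monomials
`u^j t^j` and `u^{j-1} t^j` of `N` therefore go to `z^j` and `z^{j-1}`, which is `Ψ_g`.
-/

open Finsupp

section ShiftedDiagonal

variable {R : Type*} [CommRing R]

lemma single_zero_add_single_one_inj {a b c d : ℕ} :
    (single (0 : Fin 2) a + single 1 b = single 0 c + single 1 d) ↔ a = c ∧ b = d := by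
  refine ⟨fun h => ⟨by simpa using congrArg (· 0) h, by simpa using congrArg (· 1) h⟩, ?_⟩
  rintro ⟨rfl, rfl⟩
  rfl

lemma X_zero_pow_mul_X_one_pow_eq_monomial (a b : ℕ) :
    (MvPowerSeries.X 0 ^ a * MvPowerSeries.X 1 ^ b : MvPowerSeries (Fin 2) R) =
      MvPowerSeries.monomial (single 0 a + single 1 b) 1 := by
  rw [MvPowerSeries.X_pow_eq, MvPowerSeries.X_pow_eq, MvPowerSeries.monomial_mul_monomial, one_mul]

/-- `F ↦ Σ_i ([u^i t^{i+1}] F) z^i`, with `u, t` the variables `0, 1`. -/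
def shiftedDiagonal : MvPowerSeries (Fin 2) R →ₗ[R] PowerSeries R where
  toFun F := PowerSeries.mk fun i => MvPowerSeries.coeff (single 0 i + single 1 (i + 1)) F
  map_add' F G := by ext; simp
  map_smul' c F := by ext; simp

/-- `F ↦ Σ_i (Σ_{m ≤ i+1} [u^i t^m] F) z^i`, that is `shiftedDiagonal (F / (1 - t))`. -/
def shiftedDiagonalPartialSum : MvPowerSeries (Fin 2) R →ₗ[R] PowerSeries R where
  toFun F := PowerSeries.mk fun i =>
    ∑ m ∈ Finset.range (i + 2), MvPowerSeries.coeff (single 0 i + single 1 m) F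
  map_add' F G := by ext; simp [Finset.sum_add_distrib]
  map_smul' c F := by ext; simp [Finset.mul_sum]

lemma coeff_shiftedDiagonal (F : MvPowerSeries (Fin 2) R) (i : ℕ) :
    PowerSeries.coeff i (shiftedDiagonal F) =
      MvPowerSeries.coeff (single 0 i + single 1 (i + 1)) F := by
  simp [shiftedDiagonal]

lemma coeff_shiftedDiagonalPartialSum (F : MvPowerSeries (Fin 2) R) (i : ℕ) :
    PowerSeries.coeff i (shiftedDiagonalPartialSum F) =
      ∑ m ∈ Finset.range (i + 2), MvPowerSeries.coeff (single 0 i + single 1 m) F := by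
  simp [shiftedDiagonalPartialSum]

lemma shiftedDiagonal_C_mul (c : R) (F : MvPowerSeries (Fin 2) R) :
    shiftedDiagonal (MvPowerSeries.C c * F) = PowerSeries.C c * shiftedDiagonal F := by
  ext i
  simp only [coeff_shiftedDiagonal, MvPowerSeries.coeff_C_mul, PowerSeries.coeff_C_mul]

lemma shiftedDiagonal_X_zero_mul_X_one_mul (F : MvPowerSeries (Fin 2) R) :
    shiftedDiagonal (MvPowerSeries.X 0 * MvPowerSeries.X 1 * F) =
      PowerSeries.X * shiftedDiagonal F := by
  have hX : (MvPowerSeries.X 0 * MvPowerSeries.X 1 : MvPowerSeries (Fin 2) R) =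
      MvPowerSeries.monomial (single 0 1 + single 1 1) 1 := by
    simpa using X_zero_pow_mul_X_one_pow_eq_monomial (R := R) 1 1
  ext (_ | i)
  · rw [coeff_shiftedDiagonal, PowerSeries.coeff_zero_X_mul, hX,
      MvPowerSeries.coeff_monomial_mul, if_neg]
    intro h
    simpa using Finsupp.le_def.mp h 0
  · have hidx : single (0 : Fin 2) (i + 1) + single 1 (i + 1 + 1) =
        (single 0 1 + single 1 1) + (single 0 i + single 1 (i + 1)) := by
      simp only [single_add]
      abel
    rw [coeff_shiftedDiagonal, PowerSeries.coeff_succ_X_mul, coeff_shiftedDiagonal, hX, hidx,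
      MvPowerSeries.coeff_add_monomial_mul, one_mul]

lemma shiftedDiagonal_X_zero_mul_X_one_pow_mul (n : ℕ) (F : MvPowerSeries (Fin 2) R) :
    shiftedDiagonal ((MvPowerSeries.X 0 * MvPowerSeries.X 1) ^ n * F) =
      PowerSeries.X ^ n * shiftedDiagonal F := by
  induction n with
  | zero => simp
  | succ n ih =>
    rw [pow_succ', mul_assoc, shiftedDiagonal_X_zero_mul_X_one_mul, ih, pow_succ', mul_assoc]

lemma shiftedDiagonal_eval₂_mul (p : Polynomial R) (F : MvPowerSeries (Fin 2) R) :
    shiftedDiagonal (p.eval₂ MvPowerSeries.C (MvPowerSeries.X 0 * MvPowerSeries.X 1) * F) =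
      (p : PowerSeries R) * shiftedDiagonal F := by
  induction p using Polynomial.induction_on' with
  | add p q hp hq =>
    rw [Polynomial.eval₂_add, add_mul, map_add, hp, hq, Polynomial.coe_add, add_mul]
  | monomial n c =>
    simp only [← Polynomial.C_mul_X_pow_eq_monomial, Polynomial.eval₂_mul, Polynomial.eval₂_C,
      Polynomial.eval₂_X_pow, Polynomial.coe_mul, Polynomial.coe_C, Polynomial.coe_pow,
      Polynomial.coe_X]
    rw [mul_assoc, shiftedDiagonal_C_mul, shiftedDiagonal_X_zero_mul_X_one_pow_mul, mul_assoc]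

lemma coeff_X_one_mul_zero (G : MvPowerSeries (Fin 2) R) (i : ℕ) :
    MvPowerSeries.coeff (single 0 i + single 1 0) (MvPowerSeries.X 1 * G) = 0 := by
  rw [MvPowerSeries.X, MvPowerSeries.coeff_monomial_mul, if_neg]
  intro h
  simpa using Finsupp.le_def.mp h 1

lemma coeff_X_one_mul_succ (G : MvPowerSeries (Fin 2) R) (i m : ℕ) :
    MvPowerSeries.coeff (single 0 i + single 1 (m + 1)) (MvPowerSeries.X 1 * G) =
      MvPowerSeries.coeff (single 0 i + single 1 m) G := by
  have hidx :
      single (0 : Fin 2) i + single 1 (m + 1) = single 1 1 + (single 0 i + single 1 m) := by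
    simp only [single_add]
    abel
  rw [MvPowerSeries.X, hidx, MvPowerSeries.coeff_add_monomial_mul, one_mul]

lemma shiftedDiagonalPartialSum_one_sub_X_mul (G : MvPowerSeries (Fin 2) R) :
    shiftedDiagonalPartialSum ((1 - MvPowerSeries.X 1) * G) = shiftedDiagonal G := by
  ext i
  simp only [coeff_shiftedDiagonalPartialSum, coeff_shiftedDiagonal, sub_mul, one_mul, map_sub]
  simp only [Finset.sum_range_succ' _ (i + 1), coeff_X_one_mul_zero, coeff_X_one_mul_succ]
  have telescope := Finset.sum_range_sub (fun m => MvPowerSeries.coeff (single 0 i + single 1 m) G)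
    (i + 1)
  rw [Finset.sum_sub_distrib] at telescope
  linear_combination telescope

lemma shiftedDiagonalPartialSum_X_zero_pow_mul_X_one_pow_mul_C (a b : ℕ) (c : R) :
    shiftedDiagonalPartialSum
        (MvPowerSeries.X 0 ^ a * MvPowerSeries.X 1 ^ b * MvPowerSeries.C c) =
      if b ≤ a + 1 then PowerSeries.C c * PowerSeries.X ^ a else 0 := by
  ext i
  simp only [coeff_shiftedDiagonalPartialSum, X_zero_pow_mul_X_one_pow_eq_monomial,
    MvPowerSeries.coeff_mul_C, MvPowerSeries.coeff_monomial, single_zero_add_single_one_inj,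
    ite_mul, one_mul, zero_mul]
  by_cases hi : i = a
  · subst hi
    simp only [true_and, Finset.sum_ite_eq', Finset.mem_range]
    split_ifs <;> simp <;> omega
  · simp [hi, apply_ite (PowerSeries.coeff i)]

end ShiftedDiagonal

lemma shiftedDiagonalPartialSum_NumS (g : ℕ) : shiftedDiagonalPartialSum (NumS g) = PsiW g := by
  have hterm : ∀ j, shiftedDiagonalPartialSum
      ((if j ≤ g then MvPowerSeries.X 0 ^ j * MvPowerSeries.X 1 ^ j
        else if j = g + 1 then 0
        else MvPowerSeries.X 0 ^ (j - 1) * MvPowerSeries.X 1 ^ j) * Cc ((Wpoly g).coeff j)) =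
      if j ≤ g then PowerSeries.C ((Wpoly g).coeff j) * PowerSeries.X ^ j
      else if j = g + 1 then 0
      else PowerSeries.C ((Wpoly g).coeff j) * PowerSeries.X ^ (j - 1) := by
    intro j
    split_ifs
    · rw [Cc, shiftedDiagonalPartialSum_X_zero_pow_mul_X_one_pow_mul_C, if_pos (by omega)]
    · simp
    · rw [Cc, shiftedDiagonalPartialSum_X_zero_pow_mul_X_one_pow_mul_C, if_pos (by omega)]
  rw [NumS, map_sum, Finset.sum_congr rfl fun j _ => hterm j, PsiW, Finset.range_eq_Ico,
    Finset.range_eq_Ico, ← Finset.sum_Ico_consecutive _ (Nat.zero_le (g + 1)) (by omega),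
    Finset.sum_eq_sum_Ico_succ_bot (show g + 1 < 2 * g + 3 by omega), if_neg (by omega),
    if_pos rfl, zero_add]
  congr 1
  · refine Finset.sum_congr rfl fun j hj => if_pos ?_
    have := Finset.mem_Ico.mp hj
    omega
  · refine Finset.sum_congr rfl fun j hj => ?_
    have := Finset.mem_Ico.mp hj
    rw [if_neg (by omega), if_neg (by omega)]

theorem stmt16_general (g r : ℕ) (F : Sut) (hF : DenS g r * F = NumS g) :
    ((1 + PowerSeries.C (R := Rxy) (X 0 * X 1) * PowerSeries.X) ^ (r - 1) *
        (1 - PowerSeries.C (R := Rxy) (X 0 ^ 2 * X 1) * PowerSeries.X ^ 2) ^ g *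
        (1 - PowerSeries.C (R := Rxy) (X 0 * X 1 ^ 2) * PowerSeries.X ^ 2) ^ g) *
      PowerSeries.mk (fun i => coeffUT F i (i + 1)) = PsiW g := by
  let D : Polynomial Rxy :=
    (1 + Polynomial.C (X 0 * X 1) * Polynomial.X) ^ (r - 1) *
      (1 - Polynomial.C (X 0 ^ 2 * X 1) * Polynomial.X ^ 2) ^ g *
      (1 - Polynomial.C (X 0 * X 1 ^ 2) * Polynomial.X ^ 2) ^ g
  have hDenS : (1 - MvPowerSeries.X 1) *
      (D.eval₂ MvPowerSeries.C (MvPowerSeries.X 0 * MvPowerSeries.X 1) * F) = DenS g r * F := by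
    simp only [D, DenS, Cc, Polynomial.eval₂_mul, Polynomial.eval₂_pow, Polynomial.eval₂_add,
      Polynomial.eval₂_sub, Polynomial.eval₂_one, Polynomial.eval₂_C, Polynomial.eval₂_X,
      map_mul]
    ring
  calc
    _ = (D : PowerSeries Rxy) * shiftedDiagonal F := by
      simp only [D, Polynomial.coe_mul, Polynomial.coe_pow, Polynomial.coe_add, Polynomial.coe_sub,
        Polynomial.coe_one, Polynomial.coe_C, Polynomial.coe_X]
      rfl
    _ = shiftedDiagonal (D.eval₂ MvPowerSeries.C (MvPowerSeries.X 0 * MvPowerSeries.X 1) * F) :=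
      (shiftedDiagonal_eval₂_mul D F).symm
    _ = shiftedDiagonalPartialSum (NumS g) := by
      rw [← shiftedDiagonalPartialSum_one_sub_X_mul, hDenS, hF]
    _ = PsiW g := shiftedDiagonalPartialSum_NumS g

theorem stmt16 (g r : ℕ) (hr : 1 ≤ r) (F : Sut) (hF : DenS g r * F = NumS g) :
    ((1 + PowerSeries.C (R := Rxy) (X 0 * X 1) * PowerSeries.X) ^ (r - 1) *
        (1 - PowerSeries.C (R := Rxy) (X 0 ^ 2 * X 1) * PowerSeries.X ^ 2) ^ g *
        (1 - PowerSeries.C (R := Rxy) (X 0 * X 1 ^ 2) * PowerSeries.X ^ 2) ^ g) *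
      PowerSeries.mk (fun i => coeffUT F i (i + 1)) = PsiW g :=
  stmt16_general g r F hF
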